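/- (Reduction Lemma, part 2.) Let G be a locally finite connected simple graph and (x,y) an edge of G. Let Δ_G(x,y) = N(x) ∩ N(y), P_G(x,y) = {v : d_G(x,v) = d_G(y,v) = 2}, let H be the subgraph of G induced by N(x) ∪ N(y) ∪ P_G(x,y), and let G_{(x,y)} be the graph obtained from H by deleting every edge joining a vertex of Δ_G(x,y) to a vertex of P_G(x,y). Then κ_G(x,y) = κ_{G_{(x,y)}}(x,y). -/

import Mathlib

open SimpleGraph

/-- `f` is 1-Lipschitz with respect to the shortest-path metric (the constraint
binding for pairs of vertices joined by a path). -/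
def Lip {V : Type*} (G : SimpleGraph V) (f : V → ℝ) : Prop :=
  ∀ a b : V, G.Reachable a b → |f a - f b| ≤ (G.dist a b : ℝ)

noncomputable def deg {V : Type*} (G : SimpleGraph V) (x : V) : ℕ :=
  (G.neighborSet x).ncard

noncomputable def Ef {V : Type*} (G : SimpleGraph V) (x : V) (f : V → ℝ) : ℝ :=
  (∑ᶠ z ∈ G.neighborSet x, f z) / (deg G x)

noncomputable def kappa {V : Type*} (G : SimpleGraph V) (x y : V) : ℝ :=
  1 - sSup {t : ℝ | ∃ f : V → ℝ, Lip G f ∧ t = Ef G x f - Ef G y f}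

/-- `P_G(x,y)`: the set of vertices at distance 2 from both `x` and `y`. -/
def Pset {V : Type*} (G : SimpleGraph V) (x y : V) : Set V :=
  {v | G.dist x v = 2 ∧ G.dist y v = 2}

/-- The vertex set `N(x) ∪ N(y) ∪ P_G(x,y)` of the core neighbourhood. -/
def coreSet {V : Type*} (G : SimpleGraph V) (x y : V) : Set V :=
  G.neighborSet x ∪ G.neighborSet y ∪ Pset G x y

/-- The core neighbourhood `G_{(x,y)}`: the subgraph of `G` induced by
`N(x) ∪ N(y) ∪ P_G(x,y)`, with every edge joining a vertex of
`Δ_G(x,y) = N(x) ∩ N(y)` to a vertex of `P_G(x,y)` deleted. -/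
def coreGraph {V : Type*} (G : SimpleGraph V) (x y : V) :
    SimpleGraph (coreSet G x y) where
  Adj a b := G.Adj a b ∧
    ¬(((a : V) ∈ G.neighborSet x ∩ G.neighborSet y ∧ (b : V) ∈ Pset G x y) ∨
      ((a : V) ∈ Pset G x y ∧ (b : V) ∈ G.neighborSet x ∩ G.neighborSet y))
  symm := by
    constructor
    intro a b h
    refine ⟨h.1.symm, ?_⟩
    intro hc
    exact h.2 (by tauto)
  loopless := ⟨fun a h => G.ne_of_adj h.1 rfl⟩

section Aux

variable {V : Type*} {G : SimpleGraph V} {x y : V}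

lemma not_pset_of_adj_left {u : V} (h : G.Adj x u) : u ∉ Pset G x y := by
  intro hp
  rw [← SimpleGraph.dist_eq_one_iff_adj] at h
  rw [hp.1] at h
  omega

lemma not_pset_of_adj_right {u : V} (h : G.Adj y u) : u ∉ Pset G x y := by
  intro hp
  rw [← SimpleGraph.dist_eq_one_iff_adj] at h
  rw [hp.2] at h
  omega

lemma not_pset_of_mem {u : V} (h : u ∈ G.neighborSet x ∪ G.neighborSet y) :
    u ∉ Pset G x y := by
  rcases h with h | h
  · exact not_pset_of_adj_left h
  · exact not_pset_of_adj_right h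

lemma not_pset_x : x ∉ Pset G x y := by
  intro hp
  have := hp.1
  rw [SimpleGraph.dist_self] at this
  omega

lemma not_pset_y : y ∉ Pset G x y := by
  intro hp
  have := hp.2
  rw [SimpleGraph.dist_self] at this
  omega

lemma coreGraph_adj_of_not_pset (a b : coreSet G x y) (h : G.Adj a b)
    (ha : (a : V) ∉ Pset G x y) (hb : (b : V) ∉ Pset G x y) :
    (coreGraph G x y).Adj a b := by
  refine ⟨h, ?_⟩
  rintro (⟨_, hb'⟩ | ⟨ha', _⟩)
  · exact hb hb'
  · exact ha ha'

/-- The inclusion homomorphism from the core graph into `G`. -/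
def coreHom (G : SimpleGraph V) (x y : V) : coreGraph G x y →g G where
  toFun := Subtype.val
  map_rel' := fun h => h.1

lemma dist_le_coreDist {a b : coreSet G x y} (h : (coreGraph G x y).Reachable a b) :
    G.dist (a : V) (b : V) ≤ (coreGraph G x y).dist a b := by
  obtain ⟨p, hp⟩ := h.exists_walk_length_eq_dist
  calc G.dist (a : V) (b : V) ≤ (p.map (coreHom G x y)).length := SimpleGraph.dist_le _
    _ = p.length := SimpleGraph.Walk.length_map _ _
    _ = _ := hp

lemma core_adj_x_iff (hx : x ∈ coreSet G x y) (b : coreSet G x y) :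
    (coreGraph G x y).Adj ⟨x, hx⟩ b ↔ G.Adj x (b : V) := by
  constructor
  · exact fun h => h.1
  · intro h
    refine ⟨h, ?_⟩
    rintro (⟨⟨hx1, _⟩, _⟩ | ⟨hx1, _⟩)
    · exact G.irrefl hx1
    · exact not_pset_x hx1

lemma core_adj_y_iff (hy : y ∈ coreSet G x y) (b : coreSet G x y) :
    (coreGraph G x y).Adj ⟨y, hy⟩ b ↔ G.Adj y (b : V) := by
  constructor
  · exact fun h => h.1
  · intro h
    refine ⟨h, ?_⟩
    rintro (⟨⟨_, hy1⟩, _⟩ | ⟨hy1, _⟩)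
    · exact G.irrefl hy1
    · exact not_pset_y hy1

lemma val_image_core_nbhd_x (hx : x ∈ coreSet G x y) :
    Subtype.val '' ((coreGraph G x y).neighborSet ⟨x, hx⟩) = G.neighborSet x := by
  ext v
  simp only [Set.mem_image, SimpleGraph.mem_neighborSet]
  constructor
  · rintro ⟨b, hb, rfl⟩
    exact (core_adj_x_iff hx b).mp hb
  · intro h
    exact ⟨⟨v, Or.inl (Or.inl h)⟩, (core_adj_x_iff hx _).mpr h, rfl⟩

lemma val_image_core_nbhd_y (hy : y ∈ coreSet G x y) :
    Subtype.val '' ((coreGraph G x y).neighborSet ⟨y, hy⟩) = G.neighborSet y := by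
  ext v
  simp only [Set.mem_image, SimpleGraph.mem_neighborSet]
  constructor
  · rintro ⟨b, hb, rfl⟩
    exact (core_adj_y_iff hy b).mp hb
  · intro h
    exact ⟨⟨v, Or.inl (Or.inr h)⟩, (core_adj_y_iff hy _).mpr h, rfl⟩

lemma Ef_core_x (hx : x ∈ coreSet G x y) (f : V → ℝ) :
    Ef (coreGraph G x y) ⟨x, hx⟩ (fun z => f (z : V)) = Ef G x f := by
  unfold Ef deg
  rw [← val_image_core_nbhd_x hx,
    finsum_mem_image (Set.injOn_of_injective Subtype.val_injective),
    Set.ncard_image_of_injective _ Subtype.val_injective]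

lemma Ef_core_y (hy : y ∈ coreSet G x y) (f : V → ℝ) :
    Ef (coreGraph G x y) ⟨y, hy⟩ (fun z => f (z : V)) = Ef G y f := by
  unfold Ef deg
  rw [← val_image_core_nbhd_y hy,
    finsum_mem_image (Set.injOn_of_injective Subtype.val_injective),
    Set.ncard_image_of_injective _ Subtype.val_injective]

lemma dist_le_three (hG : G.Connected) (hxy : G.Adj x y) {u u' : V}
    (hu : u ∈ G.neighborSet x ∪ G.neighborSet y)
    (hu' : u' ∈ G.neighborSet x ∪ G.neighborSet y) :
    G.dist u u' ≤ 3 := by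
  have hdxy : G.dist x y = 1 := SimpleGraph.dist_eq_one_iff_adj.mpr hxy
  have hdyx : G.dist y x = 1 := SimpleGraph.dist_eq_one_iff_adj.mpr hxy.symm
  rcases hu with hu | hu <;> rcases hu' with hu' | hu'
  · have t := hG.dist_triangle (u := u) (v := x) (w := u')
    have h1 : G.dist u x = 1 := SimpleGraph.dist_eq_one_iff_adj.mpr hu.symm
    have h2 : G.dist x u' = 1 := SimpleGraph.dist_eq_one_iff_adj.mpr hu'
    omega
  · have t := hG.dist_triangle (u := u) (v := x) (w := u')
    have t2 := hG.dist_triangle (u := x) (v := y) (w := u')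
    have h1 : G.dist u x = 1 := SimpleGraph.dist_eq_one_iff_adj.mpr hu.symm
    have h2 : G.dist y u' = 1 := SimpleGraph.dist_eq_one_iff_adj.mpr hu'
    omega
  · have t := hG.dist_triangle (u := u) (v := y) (w := u')
    have t2 := hG.dist_triangle (u := y) (v := x) (w := u')
    have h1 : G.dist u y = 1 := SimpleGraph.dist_eq_one_iff_adj.mpr hu.symm
    have h2 : G.dist x u' = 1 := SimpleGraph.dist_eq_one_iff_adj.mpr hu'
    omega
  · have t := hG.dist_triangle (u := u) (v := y) (w := u')
    have h1 : G.dist u y = 1 := SimpleGraph.dist_eq_one_iff_adj.mpr hu.symm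
    have h2 : G.dist y u' = 1 := SimpleGraph.dist_eq_one_iff_adj.mpr hu'
    omega

lemma exists_mid {u u' : V} (hr : G.Reachable u u') (h2 : G.dist u u' = 2) :
    ∃ w, G.Adj u w ∧ G.Adj w u' := by
  obtain ⟨p, hp⟩ := hr.exists_walk_length_eq_dist
  rw [h2] at hp
  cases p with
  | nil => simp at hp
  | cons h q =>
    cases q with
    | nil => simp at hp
    | cons h' r =>
      cases r with
      | nil => exact ⟨_, h, h'⟩
      | cons h'' r => simp [SimpleGraph.Walk.length_cons] at hp

/-- The mixed case of the length-2 construction. -/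
lemma mixed_walk (hG : G.Connected) (hxy : G.Adj x y) {u u' w : V}
    (hu : u ∈ G.neighborSet x ∪ G.neighborSet y)
    (hu' : u' ∈ G.neighborSet x ∪ G.neighborSet y)
    (hbx : ¬(G.Adj x u ∧ G.Adj x u')) (hby : ¬(G.Adj y u ∧ G.Adj y u'))
    (h1 : G.Adj u w) (h2 : G.Adj w u') :
    ∃ p : (coreGraph G x y).Walk ⟨u, Or.inl hu⟩ ⟨u', Or.inl hu'⟩, p.length = 2 := by
  have hPu : u ∉ Pset G x y := not_pset_of_mem hu
  have hPu' : u' ∉ Pset G x y := not_pset_of_mem hu'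
  have hΔu : u ∉ G.neighborSet x ∩ G.neighborSet y := by
    rintro ⟨ha, hb⟩
    rcases hu' with h | h
    · exact hbx ⟨ha, h⟩
    · exact hby ⟨hb, h⟩
  have hΔu' : u' ∉ G.neighborSet x ∩ G.neighborSet y := by
    rintro ⟨ha, hb⟩
    rcases hu with h | h
    · exact hbx ⟨h, ha⟩
    · exact hby ⟨h, hb⟩
  have hone : G.Adj x u ∨ G.Adj x u' := by
    rcases hu with h | h
    · exact Or.inl h
    · rcases hu' with h' | h'
      · exact Or.inr h'
      · exact absurd ⟨h, h'⟩ hby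
  have htwo : G.Adj y u ∨ G.Adj y u' := by
    rcases hu with h | h
    · rcases hu' with h' | h'
      · exact absurd ⟨h, h'⟩ hbx
      · exact Or.inr h'
    · exact Or.inl h
  by_cases hwx : w = x
  · subst hwx
    exact absurd ⟨h1.symm, h2⟩ hbx
  by_cases hwy : w = y
  · subst hwy
    exact absurd ⟨h1.symm, h2⟩ hby
  by_cases hwN : w ∈ G.neighborSet x ∪ G.neighborSet y
  · have hPw : w ∉ Pset G x y := not_pset_of_mem hwN
    exact ⟨SimpleGraph.Walk.cons
      (coreGraph_adj_of_not_pset ⟨u, Or.inl hu⟩ ⟨w, Or.inl hwN⟩ h1 hPu hPw)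
      (SimpleGraph.Walk.cons
        (coreGraph_adj_of_not_pset ⟨w, Or.inl hwN⟩ ⟨u', Or.inl hu'⟩ h2 hPw hPu') .nil), rfl⟩
  · have hwNx : ¬ G.Adj x w := fun h => hwN (Or.inl h)
    have hwNy : ¬ G.Adj y w := fun h => hwN (Or.inr h)
    have hdx : G.dist x w = 2 := by
      have hle : G.dist x w ≤ 2 := by
        rcases hone with h | h
        · have t := hG.dist_triangle (u := x) (v := u) (w := w)
          have e1 : G.dist x u = 1 := SimpleGraph.dist_eq_one_iff_adj.mpr h
          have e2 : G.dist u w = 1 := SimpleGraph.dist_eq_one_iff_adj.mpr h1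
          omega
        · have t := hG.dist_triangle (u := x) (v := u') (w := w)
          have e1 : G.dist x u' = 1 := SimpleGraph.dist_eq_one_iff_adj.mpr h
          have e2 : G.dist u' w = 1 := SimpleGraph.dist_eq_one_iff_adj.mpr h2.symm
          omega
      have hne0 : G.dist x w ≠ 0 := by
        intro h0
        exact hwx ((hG.dist_eq_zero_iff.mp h0).symm)
      have hne1 : G.dist x w ≠ 1 := fun h => hwNx (SimpleGraph.dist_eq_one_iff_adj.mp h)
      omega
    have hdy : G.dist y w = 2 := by
      have hle : G.dist y w ≤ 2 := by
        rcases htwo with h | h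
        · have t := hG.dist_triangle (u := y) (v := u) (w := w)
          have e1 : G.dist y u = 1 := SimpleGraph.dist_eq_one_iff_adj.mpr h
          have e2 : G.dist u w = 1 := SimpleGraph.dist_eq_one_iff_adj.mpr h1
          omega
        · have t := hG.dist_triangle (u := y) (v := u') (w := w)
          have e1 : G.dist y u' = 1 := SimpleGraph.dist_eq_one_iff_adj.mpr h
          have e2 : G.dist u' w = 1 := SimpleGraph.dist_eq_one_iff_adj.mpr h2.symm
          omega
      have hne0 : G.dist y w ≠ 0 := by
        intro h0
        exact hwy ((hG.dist_eq_zero_iff.mp h0).symm)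
      have hne1 : G.dist y w ≠ 1 := fun h => hwNy (SimpleGraph.dist_eq_one_iff_adj.mp h)
      omega
    have hwP : w ∈ Pset G x y := ⟨hdx, hdy⟩
    have a1 : (coreGraph G x y).Adj ⟨u, Or.inl hu⟩ ⟨w, Or.inr hwP⟩ := by
      refine ⟨h1, ?_⟩
      rintro (⟨hΔ, _⟩ | ⟨hP, _⟩)
      · exact hΔu hΔ
      · exact hPu hP
    have a2 : (coreGraph G x y).Adj ⟨w, Or.inr hwP⟩ ⟨u', Or.inl hu'⟩ := by
      refine ⟨h2, ?_⟩
      rintro (⟨_, hP⟩ | ⟨_, hΔ⟩)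
      · exact hPu' hP
      · exact hΔu' hΔ
    exact ⟨SimpleGraph.Walk.cons a1 (SimpleGraph.Walk.cons a2 .nil), rfl⟩

lemma core_walk (hG : G.Connected) (hxy : G.Adj x y) {u u' : V}
    (hu : u ∈ G.neighborSet x ∪ G.neighborSet y)
    (hu' : u' ∈ G.neighborSet x ∪ G.neighborSet y) :
    ∃ p : (coreGraph G x y).Walk ⟨u, Or.inl hu⟩ ⟨u', Or.inl hu'⟩,
      p.length ≤ G.dist u u' := by
  have hxC : x ∈ coreSet G x y := Or.inl (Or.inr hxy.symm)
  have hyC : y ∈ coreSet G x y := Or.inl (Or.inl hxy)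
  have hPu : u ∉ Pset G x y := not_pset_of_mem hu
  have hPu' : u' ∉ Pset G x y := not_pset_of_mem hu'
  have hPx : x ∉ Pset G x y := not_pset_x
  have hPy : y ∉ Pset G x y := not_pset_y
  have h3 : G.dist u u' ≤ 3 := dist_le_three hG hxy hu hu'
  have hr : G.Reachable u u' := hG.preconnected u u'
  obtain ⟨n, hn⟩ : ∃ n, G.dist u u' = n := ⟨_, rfl⟩
  rw [hn] at h3 ⊢
  interval_cases n
  · have he : u = u' := hr.dist_eq_zero_iff.mp hn
    subst he
    exact ⟨.nil, by simp⟩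
  · have ha : G.Adj u u' := SimpleGraph.dist_eq_one_iff_adj.mp hn
    exact ⟨(coreGraph_adj_of_not_pset ⟨u, Or.inl hu⟩ ⟨u', Or.inl hu'⟩ ha hPu hPu').toWalk,
      by simp⟩
  · obtain ⟨w, h1, h2⟩ := exists_mid hr hn
    by_cases hbx : G.Adj x u ∧ G.Adj x u'
    · exact ⟨SimpleGraph.Walk.cons
        (coreGraph_adj_of_not_pset ⟨u, Or.inl hu⟩ ⟨x, hxC⟩ hbx.1.symm hPu hPx)
        (SimpleGraph.Walk.cons
          (coreGraph_adj_of_not_pset ⟨x, hxC⟩ ⟨u', Or.inl hu'⟩ hbx.2 hPx hPu') .nil),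
        by simp⟩
    by_cases hby : G.Adj y u ∧ G.Adj y u'
    · exact ⟨SimpleGraph.Walk.cons
        (coreGraph_adj_of_not_pset ⟨u, Or.inl hu⟩ ⟨y, hyC⟩ hby.1.symm hPu hPy)
        (SimpleGraph.Walk.cons
          (coreGraph_adj_of_not_pset ⟨y, hyC⟩ ⟨u', Or.inl hu'⟩ hby.2 hPy hPu') .nil),
        by simp⟩
    · obtain ⟨p, hp⟩ := mixed_walk hG hxy hu hu' hbx hby h1 h2
      exact ⟨p, by omega⟩
  · have hbx : ¬(G.Adj x u ∧ G.Adj x u') := by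
      rintro ⟨ha, hb⟩
      have t := hG.dist_triangle (u := u) (v := x) (w := u')
      have e1 : G.dist u x = 1 := SimpleGraph.dist_eq_one_iff_adj.mpr ha.symm
      have e2 : G.dist x u' = 1 := SimpleGraph.dist_eq_one_iff_adj.mpr hb
      omega
    have hby : ¬(G.Adj y u ∧ G.Adj y u') := by
      rintro ⟨ha, hb⟩
      have t := hG.dist_triangle (u := u) (v := y) (w := u')
      have e1 : G.dist u y = 1 := SimpleGraph.dist_eq_one_iff_adj.mpr ha.symm
      have e2 : G.dist y u' = 1 := SimpleGraph.dist_eq_one_iff_adj.mpr hb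
      omega
    rcases hu with hux | huy <;> rcases hu' with hu'x | hu'y
    · exact absurd ⟨hux, hu'x⟩ hbx
    · exact ⟨SimpleGraph.Walk.cons
        (coreGraph_adj_of_not_pset ⟨u, Or.inl (Or.inl hux)⟩ ⟨x, hxC⟩ hux.symm hPu hPx)
        (SimpleGraph.Walk.cons
          (coreGraph_adj_of_not_pset ⟨x, hxC⟩ ⟨y, hyC⟩ hxy hPx hPy)
          (SimpleGraph.Walk.cons
            (coreGraph_adj_of_not_pset ⟨y, hyC⟩ ⟨u', Or.inl (Or.inr hu'y)⟩ hu'y hPy hPu')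
            .nil)), by simp⟩
    · exact ⟨SimpleGraph.Walk.cons
        (coreGraph_adj_of_not_pset ⟨u, Or.inl (Or.inr huy)⟩ ⟨y, hyC⟩ huy.symm hPu hPy)
        (SimpleGraph.Walk.cons
          (coreGraph_adj_of_not_pset ⟨y, hyC⟩ ⟨x, hxC⟩ hxy.symm hPy hPx)
          (SimpleGraph.Walk.cons
            (coreGraph_adj_of_not_pset ⟨x, hxC⟩ ⟨u', Or.inl (Or.inl hu'x)⟩ hu'x hPx hPu')
            .nil)), by simp⟩
    · exact absurd ⟨huy, hu'y⟩ hby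

end Aux

/-- **Reduction lemma, part 2.** The Ricci curvature of an edge `(x,y)` of a locally
finite connected graph `G` equals the Ricci curvature of that edge computed in the
core neighbourhood `G_{(x,y)}`. -/
theorem reduction_lemma_core {V : Type*} (G : SimpleGraph V)
    (hlf : ∀ v : V, (G.neighborSet v).Finite) (hG : G.Connected)
    (x y : V) (hxy : G.Adj x y) :
    kappa G x y =
      kappa (coreGraph G x y)
        ⟨x, Or.inl (Or.inr hxy.symm)⟩ ⟨y, Or.inl (Or.inl hxy)⟩ := by
  classical
  have hxC : x ∈ coreSet G x y := Or.inl (Or.inr hxy.symm)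
  have hyC : y ∈ coreSet G x y := Or.inl (Or.inl hxy)
  have hset : {t : ℝ | ∃ f : V → ℝ, Lip G f ∧ t = Ef G x f - Ef G y f} =
      {t : ℝ | ∃ g : (coreSet G x y) → ℝ, Lip (coreGraph G x y) g ∧
        t = Ef (coreGraph G x y) ⟨x, hxC⟩ g - Ef (coreGraph G x y) ⟨y, hyC⟩ g} := by
    ext t
    constructor
    · rintro ⟨f, hf, rfl⟩
      refine ⟨fun z => f (z : V), ?_, ?_⟩
      · intro a b hr
        have h1 := hf (a : V) (b : V) (hr.map (coreHom G x y))
        exact h1.trans (Nat.cast_le.mpr (dist_le_coreDist hr))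
      · rw [Ef_core_x hxC, Ef_core_y hyC]
    · rintro ⟨g, hg, rfl⟩
      set T : Finset V := (hlf x).toFinset ∪ (hlf y).toFinset with hT
      have hmemT : ∀ u : V, u ∈ T ↔ (G.Adj x u ∨ G.Adj y u) := by
        intro u
        simp [hT, Set.Finite.mem_toFinset]
      have hTne : T.Nonempty := ⟨y, (hmemT y).mpr (Or.inl hxy)⟩
      have hTcore : ∀ u ∈ T, u ∈ G.neighborSet x ∪ G.neighborSet y := by
        intro u hu
        rcases (hmemT u).mp hu with h | h
        · exact Or.inl h
        · exact Or.inr h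
      set g' : V → ℝ := fun v => if h : v ∈ coreSet G x y then g ⟨v, h⟩ else 0 with hg'
      set f : V → ℝ := fun v => T.inf' hTne (fun u => g' u + (G.dist u v : ℝ)) with hfdef
      have key : ∀ u ∈ T, ∀ u' ∈ T, |g' u - g' u'| ≤ (G.dist u u' : ℝ) := by
        intro u hu u' hu'
        have hUm := hTcore u hu
        have hU'm := hTcore u' hu'
        obtain ⟨p, hp⟩ := core_walk hG hxy hUm hU'm
        have hre : (coreGraph G x y).Reachable ⟨u, Or.inl hUm⟩ ⟨u', Or.inl hU'm⟩ :=
          p.reachable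
        have h1 := hg _ _ hre
        have h2 : ((coreGraph G x y).dist ⟨u, Or.inl hUm⟩ ⟨u', Or.inl hU'm⟩ : ℝ) ≤
            (G.dist u u' : ℝ) := Nat.cast_le.mpr ((SimpleGraph.dist_le p).trans hp)
        have e1 : g' u = g ⟨u, Or.inl hUm⟩ := dif_pos (Or.inl hUm)
        have e2 : g' u' = g ⟨u', Or.inl hU'm⟩ := dif_pos (Or.inl hU'm)
        rw [e1, e2]
        exact h1.trans h2
      have hfT : ∀ u ∈ T, f u = g' u := by
        intro u hu
        apply le_antisymm
        · have h := Finset.inf'_le (fun u' => g' u' + (G.dist u' u : ℝ)) hu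
          simp only [SimpleGraph.dist_self, Nat.cast_zero, add_zero] at h
          exact h
        · apply Finset.le_inf'
          intro u' hu'
          have h := key u hu u' hu'
          have habs := (abs_sub_le_iff.mp h).1
          rw [SimpleGraph.dist_comm]
          linarith
      have hLip : Lip G f := by
        have main : ∀ a b : V, f a - f b ≤ (G.dist a b : ℝ) := by
          intro a b
          obtain ⟨u₀, hu₀, hmin⟩ :=
            Finset.exists_mem_eq_inf' hTne (fun u => g' u + (G.dist u b : ℝ))
          have h1 : f a ≤ g' u₀ + (G.dist u₀ a : ℝ) :=
            Finset.inf'_le (fun u => g' u + (G.dist u a : ℝ)) hu₀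
          have h2 : (G.dist u₀ a : ℝ) ≤ (G.dist u₀ b : ℝ) + (G.dist b a : ℝ) := by
            exact_mod_cast hG.dist_triangle
          have h3 : f b = g' u₀ + (G.dist u₀ b : ℝ) := hmin
          have h4 : (G.dist b a : ℝ) = (G.dist a b : ℝ) := by rw [SimpleGraph.dist_comm]
          linarith
        intro a b _
        rw [abs_sub_le_iff]
        refine ⟨main a b, ?_⟩
        have := main b a
        rwa [show G.dist b a = G.dist a b from SimpleGraph.dist_comm] at this
      refine ⟨f, hLip, ?_⟩
      have hfg : ∀ (z : coreSet G x y) (hz : (z : V) ∈ T), f (z : V) = g z := by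
        intro z hz
        rw [hfT _ hz]
        have : g' (z : V) = g ⟨(z : V), z.2⟩ := dif_pos z.2
        rw [this]
      have ex : Ef (coreGraph G x y) ⟨x, hxC⟩ g = Ef G x f := by
        rw [← Ef_core_x hxC f]
        unfold Ef
        congr 1
        apply finsum_mem_congr rfl
        intro z hz
        exact (hfg z ((hmemT (z : V)).mpr (Or.inl ((core_adj_x_iff hxC z).mp hz)))).symm
      have ey : Ef (coreGraph G x y) ⟨y, hyC⟩ g = Ef G y f := by
        rw [← Ef_core_y hyC f]
        unfold Ef
        congr 1
        apply finsum_mem_congr rfl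
        intro z hz
        exact (hfg z ((hmemT (z : V)).mpr (Or.inr ((core_adj_y_iff hyC z).mp hz)))).symm
      rw [ex, ey]
  unfold kappa
  rw [hset]
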